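/- For every constant C there exists a finite simple graph G with D(G) − ⌈S(G)/2⌉ ≥ C, where S is the sum index and D is the difference index. (E.g., the graphs K̂_n^{(k,k)} with n = binom(k,2) + 2k satisfy S(G) = Θ(k²) and D(G) ≥ ⌈S(G)/2⌉ + k/3 − 1.) -/

import Mathlib

/-!
The witness is `K_{1,m,m}` with `m = 4C + 8`. Labelling the apex `0` and the two parts `1, …, m`
and `-1, …, -m` puts every edge sum in `[-m, m]`, so `S ≤ 2m + 1`.

For `D`, translate any injective labelling so that the apex gets `0`, and let `w` be a label of
largest absolute value; swapping the parts and negating all labels, `w > 0` lies in the part `P`.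
The absolute values of the `2m` labels give at least `m` differences in `[0, w]`, and `w - q > w`
for each negative label `q` of the other part `Q`. If `Q` has few negative labels, then either `P`
has many, and Cauchy–Davenport gives at least `|Q⁺| + |P⁻| - 1` positive differences `q - p`, or
`P⁺ ∪ Q⁺` is large and consists of differences with the apex. Each case yields `5m ≤ 4D + 4`.
-/

open SimpleGraph

/-- The sum index of a finite simple graph. -/
noncomputable def sumIndex {V : Type*} [Fintype V] (G : SimpleGraph V) : ℕ :=
  sInf {n | ∃ f : V → ℤ, Function.Injective f ∧
    {s : ℤ | ∃ u v, G.Adj u v ∧ s = f u + f v}.ncard = n}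

/-- The difference index of a finite simple graph. -/
noncomputable def diffIndex {V : Type*} [Fintype V] (G : SimpleGraph V) : ℕ :=
  sInf {n | ∃ f : V → ℤ, Function.Injective f ∧
    {s : ℤ | ∃ u v, G.Adj u v ∧ s = |f u - f v|}.ncard = n}

open Finset
open scoped Pointwise

lemma card_le_two_mul_card_image_abs {α : Type*} [AddGroup α] [LinearOrder α] (s : Finset α) :
    #s ≤ 2 * #(s.image abs) :=
  card_le_mul_card_image s 2 fun b _ ↦
    (card_le_card (t := {b, -b}) fun x hx ↦ by
      obtain hb | hb := eq_or_eq_neg_of_abs_eq (mem_filter.1 hx).2 <;> simp [hb]).trans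
      card_le_two

lemma card_filter_pos_add_card_filter_neg {s : Finset ℤ} (hs : 0 ∉ s) :
    #{x ∈ s | 0 < x} + #{x ∈ s | x < 0} = #s := by
  rw [← card_union_of_disjoint (disjoint_filter.2 fun _ _ h h' ↦ (h.trans h').false),
    ← filter_or, filter_true_of_mem fun x hx ↦ lt_or_gt_of_ne (ne_of_mem_of_not_mem hx hs).symm]

/-- The edge differences of `K_{1,m,m}`, with its apex labelled `0` and its two parts labelled by
`P` and `Q`, all lie in `T`. -/
structure TripartiteDiffsIn (P Q T : Finset ℤ) : Prop where
  disjoint : Disjoint P Q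
  zero_notMem_left : 0 ∉ P
  zero_notMem_right : 0 ∉ Q
  abs_mem_left : ∀ p ∈ P, |p| ∈ T
  abs_mem_right : ∀ q ∈ Q, |q| ∈ T
  abs_sub_mem : ∀ p ∈ P, ∀ q ∈ Q, |p - q| ∈ T

namespace TripartiteDiffsIn

variable {P Q T : Finset ℤ} {m : ℕ}

lemma symm (h : TripartiteDiffsIn P Q T) : TripartiteDiffsIn Q P T where
  disjoint := h.disjoint.symm
  zero_notMem_left := h.zero_notMem_right
  zero_notMem_right := h.zero_notMem_left
  abs_mem_left := h.abs_mem_right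
  abs_mem_right := h.abs_mem_left
  abs_sub_mem q hq p hp := abs_sub_comm p q ▸ h.abs_sub_mem p hp q hq

lemma neg (h : TripartiteDiffsIn P Q T) : TripartiteDiffsIn (-P) (-Q) T where
  disjoint := Finset.disjoint_left.2 fun x hP hQ ↦
    Finset.disjoint_left.1 h.disjoint (mem_neg'.1 hP) (mem_neg'.1 hQ)
  zero_notMem_left := by simpa [mem_neg'] using h.zero_notMem_left
  zero_notMem_right := by simpa [mem_neg'] using h.zero_notMem_right
  abs_mem_left p hp := abs_neg p ▸ h.abs_mem_left _ (mem_neg'.1 hp)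
  abs_mem_right q hq := abs_neg q ▸ h.abs_mem_right _ (mem_neg'.1 hq)
  abs_sub_mem p hp q hq := by
    have := h.abs_sub_mem _ (mem_neg'.1 hp) _ (mem_neg'.1 hq)
    rwa [neg_sub_neg, abs_sub_comm] at this

lemma card_add_card_filter_neg_le (h : TripartiteDiffsIn P Q T) (hP : #P = m) (hQ : #Q = m)
    {w : ℤ} (hw : w ∈ P) (hmax : ∀ l ∈ P ∪ Q, |l| ≤ w) : m + #{q ∈ Q | q < 0} ≤ #T := by
  have hw0 : 0 ≤ w := (abs_nonneg w).trans (hmax w (mem_union_left _ hw))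
  have hA : m ≤ #((P ∪ Q).image abs) := by
    have := card_le_two_mul_card_image_abs (P ∪ Q)
    rw [card_union_of_disjoint h.disjoint] at this
    omega
  set A := (P ∪ Q).image abs
  set B := {q ∈ Q | q < 0}.image (w - ·)
  have hB : #B = #{q ∈ Q | q < 0} := card_image_of_injective _ sub_right_injective
  have hAT : A ⊆ T := by
    simp only [A, subset_iff, mem_image, mem_union, forall_exists_index, and_imp]
    rintro _ l (hl | hl) rfl
    exacts [h.abs_mem_left l hl, h.abs_mem_right l hl]
  have hBT : B ⊆ T := by
    simp only [B, subset_iff, mem_image, mem_filter, forall_exists_index, and_imp]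
    rintro _ q hq hq0 rfl
    exact abs_of_pos (by omega : 0 < w - q) ▸ h.abs_sub_mem w hw q hq
  have hAB : Disjoint A B := by
    simp only [A, B, Finset.disjoint_left, mem_image, mem_filter, not_exists, not_and,
      forall_exists_index, and_imp]
    rintro _ l hl rfl q - hq hwq
    have := hmax l hl
    omega
  have := card_le_card (union_subset hAT hBT)
  rw [card_union_of_disjoint hAB] at this
  omega

lemma card_filter_pos_add_card_filter_neg_le (h : TripartiteDiffsIn P Q T)
    (hQ : {q ∈ Q | 0 < q}.Nonempty) (hP : {p ∈ P | p < 0}.Nonempty) :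
    #{q ∈ Q | 0 < q} + #{p ∈ P | p < 0} ≤ #T + 1 := by
  have hCD := cauchy_davenport_of_isAddTorsionFree hQ hP.neg
  have hsub : {q ∈ Q | 0 < q} + -{p ∈ P | p < 0} ⊆ T := by
    intro x hx
    obtain ⟨q, hq, y, hy, rfl⟩ := mem_add.1 hx
    rw [mem_neg', mem_filter] at hy
    rw [mem_filter] at hq
    have := h.abs_sub_mem _ hy.1 q hq.1
    rwa [abs_sub_comm, abs_of_pos (by omega), sub_eq_add_neg, neg_neg] at this
  rw [card_neg] at hCD
  have := card_le_card hsub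
  omega

lemma card_filter_pos_add_card_filter_pos_le (h : TripartiteDiffsIn P Q T) :
    #{p ∈ P | 0 < p} + #{q ∈ Q | 0 < q} ≤ #T := by
  rw [← card_union_of_disjoint (disjoint_filter_filter h.disjoint)]
  refine card_le_card fun x hx ↦ ?_
  rcases mem_union.1 hx with hx | hx <;> rw [mem_filter] at hx
  · exact abs_of_pos hx.2 ▸ h.abs_mem_left x hx.1
  · exact abs_of_pos hx.2 ▸ h.abs_mem_right x hx.1

lemma five_mul_le_of_forall_abs_le (h : TripartiteDiffsIn P Q T) (hP : #P = m) (hQ : #Q = m)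
    {w : ℤ} (hw : w ∈ P) (hmax : ∀ l ∈ P ∪ Q, |l| ≤ w) : 5 * m ≤ 4 * #T + 4 := by
  have hsmall := h.card_add_card_filter_neg_le hP hQ hw hmax
  have hPsplit := card_filter_pos_add_card_filter_neg h.zero_notMem_left
  have hQsplit := card_filter_pos_add_card_filter_neg h.zero_notMem_right
  have hpos := h.card_filter_pos_add_card_filter_pos_le
  by_cases hQn : m ≤ 4 * #{q ∈ Q | q < 0}
  · omega
  by_cases hPn : m ≤ 2 * #{p ∈ P | p < 0}
  · have := h.card_filter_pos_add_card_filter_neg_le (card_pos.1 (by omega))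
      (card_pos.1 (by omega))
    omega
  · omega

lemma five_mul_le (h : TripartiteDiffsIn P Q T) (hP : #P = m) (hQ : #Q = m) :
    5 * m ≤ 4 * #T + 4 := by
  rcases (P ∪ Q).eq_empty_or_nonempty with hPQ | hPQ
  · rw [union_eq_empty] at hPQ
    simp [← hP, hPQ.1]
  obtain ⟨w, hw, hmax⟩ := exists_max_image (P ∪ Q) abs hPQ
  wlog hwP : w ∈ P generalizing P Q
  · rw [union_comm] at hw hmax hPQ
    exact this h.symm hQ hP hPQ hw hmax ((mem_union.1 hw).resolve_right hwP)
  rcases abs_choice w with hw' | hw'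
  · exact h.five_mul_le_of_forall_abs_le hP hQ hwP (hw' ▸ hmax)
  · refine h.neg.five_mul_le_of_forall_abs_le (card_neg P ▸ hP) (card_neg Q ▸ hQ)
      (mem_neg'.2 <| (neg_neg w).symm ▸ hwP) fun l hl ↦ ?_
    rw [← hw', ← abs_neg]
    exact hmax _ (by simpa [mem_neg'] using hl)

end TripartiteDiffsIn

section Index

variable {V : Type*} [Fintype V] (G : SimpleGraph V)

lemma sumIndex_le_ncard {f : V → ℤ} (hf : Function.Injective f) :
    sumIndex G ≤ {s : ℤ | ∃ u v, G.Adj u v ∧ s = f u + f v}.ncard :=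
  Nat.sInf_le ⟨f, hf, rfl⟩

lemma exists_injective_ncard_eq_diffIndex :
    ∃ f : V → ℤ, Function.Injective f ∧
      {s : ℤ | ∃ u v, G.Adj u v ∧ s = |f u - f v|}.ncard = diffIndex G := by
  have hinj : Function.Injective fun v ↦ ((Fintype.equivFin V v : ℕ) : ℤ) :=
    Nat.cast_injective.comp (Fin.val_injective.comp (Fintype.equivFin V).injective)
  exact Nat.sInf_mem (s := {n | ∃ f : V → ℤ, Function.Injective f ∧
    {s : ℤ | ∃ u v, G.Adj u v ∧ s = |f u - f v|}.ncard = n}) ⟨_, _, hinj, rfl⟩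

end Index

/-- The complete tripartite graph `K_{1,m,m}`: its apex is `none`, its parts are the two copies
of `Fin m`. -/
def completeTripartite (m : ℕ) : SimpleGraph (Option (Fin m ⊕ Fin m)) :=
  (⊤ : SimpleGraph (Option Bool)).comap (Option.map Sum.isRight)

@[simp]
lemma completeTripartite_adj {m : ℕ} {u v : Option (Fin m ⊕ Fin m)} :
    (completeTripartite m).Adj u v ↔ u.map Sum.isRight ≠ v.map Sum.isRight := by
  simp [completeTripartite]

def tripartiteSumLabel (m : ℕ) : Option (Fin m ⊕ Fin m) → ℤ
  | none => 0
  | some (Sum.inl i) => i + 1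
  | some (Sum.inr j) => -(j + 1)

lemma tripartiteSumLabel_injective (m : ℕ) : Function.Injective (tripartiteSumLabel m) := by
  rintro (_ | i | i) (_ | j | j) h <;> simp only [tripartiteSumLabel] at h <;>
    first | rfl | omega | simp only [Option.some.injEq, Sum.inl.injEq, Sum.inr.injEq]; omega

lemma sumIndex_completeTripartite_le (m : ℕ) : sumIndex (completeTripartite m) ≤ 2 * m + 1 := by
  refine (sumIndex_le_ncard _ (tripartiteSumLabel_injective m)).trans ?_
  calc _ ≤ (Set.Icc (-m : ℤ) m).ncard := Set.ncard_le_ncard ?_ (Set.finite_Icc _ _)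
    _ = 2 * m + 1 := by rw [Set.ncard_eq_toFinset_card', Set.toFinset_Icc, Int.card_Icc]; omega
  rintro _ ⟨(_ | i | i), (_ | j | j), huv, rfl⟩ <;>
    simp only [completeTripartite_adj, Option.map, Sum.isRight, ne_eq, not_true_eq_false] at huv <;>
    simp only [tripartiteSumLabel, Set.mem_Icc] <;> omega

lemma tripartiteDiffsIn_completeTripartite {m : ℕ} {f : Option (Fin m ⊕ Fin m) → ℤ}
    (hf : Function.Injective f)
    (hS : {s : ℤ | ∃ u v, (completeTripartite m).Adj u v ∧ s = |f u - f v|}.Finite) :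
    TripartiteDiffsIn (univ.image fun i ↦ f (some (.inl i)) - f none)
      (univ.image fun j ↦ f (some (.inr j)) - f none) hS.toFinset where
  disjoint := by
    simp only [Finset.disjoint_left, mem_image, mem_univ, true_and, not_exists]
    rintro _ ⟨i, rfl⟩ j hij
    simpa using hf (sub_left_injective hij)
  zero_notMem_left := by simp [sub_eq_zero, hf.eq_iff]
  zero_notMem_right := by simp [sub_eq_zero, hf.eq_iff]
  abs_mem_left := by
    simp only [mem_image, mem_univ, true_and, forall_exists_index, forall_apply_eq_imp_iff]
    exact fun i ↦ hS.mem_toFinset.2 ⟨_, _, by simp, rfl⟩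
  abs_mem_right := by
    simp only [mem_image, mem_univ, true_and, forall_exists_index, forall_apply_eq_imp_iff]
    exact fun j ↦ hS.mem_toFinset.2 ⟨_, _, by simp, rfl⟩
  abs_sub_mem := by
    simp only [mem_image, mem_univ, true_and, forall_exists_index, forall_apply_eq_imp_iff]
    exact fun i j ↦ hS.mem_toFinset.2
      ⟨some (.inl i), some (.inr j), by simp, by rw [sub_sub_sub_cancel_right]⟩

lemma five_mul_le_diffIndex_completeTripartite (m : ℕ) :
    5 * m ≤ 4 * diffIndex (completeTripartite m) + 4 := by
  obtain ⟨f, hf, hD⟩ := exists_injective_ncard_eq_diffIndex (completeTripartite m)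
  have hS : {s : ℤ | ∃ u v, (completeTripartite m).Adj u v ∧ s = |f u - f v|}.Finite :=
    (Set.finite_range fun p : _ × _ ↦ |f p.1 - f p.2|).subset <| by
      rintro _ ⟨u, v, -, rfl⟩
      exact ⟨(u, v), rfl⟩
  have hcard (k : Fin m → Fin m ⊕ Fin m) (hk : k.Injective) :
      #(univ.image fun i ↦ f (some (k i)) - f none) = m := by
    rw [card_image_of_injective _ fun i j hij ↦ hk (by simpa using hf (sub_left_injective hij)),
      card_univ, Fintype.card_fin]
  rw [← hD, Set.ncard_eq_toFinset_card _ hS]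
  exact (tripartiteDiffsIn_completeTripartite hf hS).five_mul_le
    (hcard _ Sum.inl_injective) (hcard _ Sum.inr_injective)

theorem stmt14 (C : ℕ) :
    ∃ (V : Type) (_ : Fintype V) (G : SimpleGraph V),
      (sumIndex G + 1) / 2 + C ≤ diffIndex G := by
  refine ⟨_, inferInstance, completeTripartite (4 * C + 8), ?_⟩
  have hS := sumIndex_completeTripartite_le (4 * C + 8)
  have hD := five_mul_le_diffIndex_completeTripartite (4 * C + 8)
  omega
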